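/- Let f, g : F_2^m → F_2 with f(0)=g(0)=0, and let a, b ∈ F_2^m be distinct. The codeword f+s_a covers the codeword g+s_b if and only if (f+g)^(a+b) + f̂(a) − ĝ(b) = 2^m. -/

import Mathlib

/-! With `F x = (-1)^(f x + a·x)` and `G x = (-1)^(g x + b·x)`, the Walsh combination is
`∑ₓ (F x G x + F x - G x)`. Each summand is `1`, except `-3` exactly when `F x = -1` and
`G x = 1`, i.e. when `x` lies in the support of `f + s_a` but not of `g + s_b`. So the sum
equals `2^m` iff there is no such `x`; at `x = 0` there is none since `f 0 = 0`. -/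

open Finset

/-- Standard inner product on `F_2^m`. -/
def ip {m : ℕ} (w x : Fin m → ZMod 2) : ZMod 2 := ∑ i, w i * x i

/-- Signed Walsh transform `ĥ(w) = Σ_x (-1)^(h(x)+w·x)`. -/
def walshS {m : ℕ} (h : (Fin m → ZMod 2) → ZMod 2) (w : Fin m → ZMod 2) : ℤ :=
  ∑ x : Fin m → ZMod 2, (-1 : ℤ) ^ ((h x + ip w x).val)

/-- `covers c d` : support containment `Supp(c) ⊆ Supp(d)`, i.e. `c ⪯ d`. -/
def covers {ι : Type*} (c d : ι → ZMod 2) : Prop := ∀ x, c x ≠ 0 → d x ≠ 0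

def coverDefect (u v : ZMod 2) : ℤ := (-1) ^ (u + v).val + (-1) ^ u.val - (-1) ^ v.val

lemma coverDefect_le_one (u v : ZMod 2) : coverDefect u v ≤ 1 := by
  revert u v; decide

lemma coverDefect_eq_one_iff (u v : ZMod 2) : coverDefect u v = 1 ↔ (u ≠ 0 → v ≠ 0) := by
  revert u v; decide

theorem sum_coverDefect_eq_card_iff {ι : Type*} [Fintype ι] (c d : ι → ZMod 2) :
    ∑ x, coverDefect (c x) (d x) = Fintype.card ι ↔ covers c d := by
  have hle : ∀ x ∈ (univ : Finset ι), coverDefect (c x) (d x) ≤ 1 :=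
    fun x _ => coverDefect_le_one _ _
  rw [← card_univ, ← mul_one (#univ : ℤ), ← nsmul_eq_mul, ← sum_const,
    sum_eq_sum_iff_of_le hle]
  simp only [mem_univ, true_implies, coverDefect_eq_one_iff, covers]

lemma covers_subtype_ne_iff {ι : Type*} {c d : ι → ZMod 2} {i₀ : ι} (hc : c i₀ = 0) :
    covers (fun x : {x // x ≠ i₀} => c x) (fun x => d x) ↔ covers c d := by
  refine ⟨fun h x hx => ?_, fun h x hx => h x hx⟩
  have hx₀ : x ≠ i₀ := by rintro rfl; exact hx hc
  exact h ⟨x, hx₀⟩ hx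

lemma ip_add_left {m : ℕ} (a b x : Fin m → ZMod 2) : ip (a + b) x = ip a x + ip b x := by
  simp [ip, add_mul, sum_add_distrib]

lemma ip_zero_right {m : ℕ} (a : Fin m → ZMod 2) : ip a 0 = 0 := by
  simp [ip]

lemma walshS_add_add_sub {m : ℕ} (f g : (Fin m → ZMod 2) → ZMod 2) (a b : Fin m → ZMod 2) :
    walshS (f + g) (a + b) + walshS f a - walshS g b
      = ∑ x, coverDefect (f x + ip a x) (g x + ip b x) := by
  have h : ∀ x, (f + g) x + ip (a + b) x = (f x + ip a x) + (g x + ip b x) := fun x => by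
    rw [ip_add_left, Pi.add_apply]; ring
  simp only [walshS, coverDefect, h, ← sum_add_distrib, ← sum_sub_distrib]

theorem stmt_7_general (m : ℕ) (f g : (Fin m → ZMod 2) → ZMod 2)
    (hf0 : f 0 = 0) (a b : Fin m → ZMod 2) :
    covers (fun x : {x : Fin m → ZMod 2 // x ≠ 0} => f x.1 + ip a x.1)
           (fun x : {x : Fin m → ZMod 2 // x ≠ 0} => g x.1 + ip b x.1)
      ↔ walshS (f + g) (a + b) + walshS f a - walshS g b = 2 ^ m := by
  have hc : f 0 + ip a 0 = 0 := by rw [hf0, ip_zero_right, add_zero]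
  have hcard : (Fintype.card (Fin m → ZMod 2) : ℤ) = 2 ^ m := by simp
  rw [covers_subtype_ne_iff (c := fun x => f x + ip a x) (d := fun x => g x + ip b x) hc,
    walshS_add_add_sub, ← hcard, sum_coverDefect_eq_card_iff]

theorem stmt_7 (m : ℕ) (f g : (Fin m → ZMod 2) → ZMod 2)
    (hf0 : f 0 = 0) (hg0 : g 0 = 0) (a b : Fin m → ZMod 2) (hab : a ≠ b) :
    covers (fun x : {x : Fin m → ZMod 2 // x ≠ 0} => f x.1 + ip a x.1)
           (fun x : {x : Fin m → ZMod 2 // x ≠ 0} => g x.1 + ip b x.1)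
      ↔ walshS (f + g) (a + b) + walshS f a - walshS g b = 2 ^ m :=
  stmt_7_general m f g hf0 a b
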